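/- arXiv:1212.3519 — 2 statements merged into one kernel-verified Lean document; each statement's English description precedes it below -/
import Mathlib

section
/- For each positive integer n, the diagonal CGPT matrix M_{nn}(D) is invertible; more precisely, for every nonzero v ∈ C^{2n+1}, the quadratic form v* M_{nn}(D) v is nonzero (strictly positive if λ > 1/2 and strictly negative if λ ≤ −1/2). -/
/-!
For `v ≠ 0` put `w = Σ_m v_m r^n Y_n^m`, a nonzero complex harmonic polynomial. Expanding the
CGPTs, `v* M_{nn} v = Σ_{α,β} conj(w_β) w_α M_{αβ}`, whose real part is the sum of the GPT
quadratic forms of `Re w` and `Im w`. Both are harmonic and at least one is nonzero, so the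
positivity property of GPTs gives the sign of the real part. A matrix whose quadratic form
vanishes only at `0` has trivial kernel, hence is invertible.
-/

open Matrix Finset
open scoped ComplexConjugate

noncomputable section

/-- The contracted GPT `M_{nmlk}` as a harmonic combination of GPTs (see the
definition in Statement 4): `M_{nmlk} = Σ_{|α|=n,|β|=l} conj(a^{kl}_β) a^{mn}_α M_{αβ}`. -/
def cgpt (S : ℕ → Finset (Fin 3 → ℕ)) (GPT : (Fin 3 → ℕ) → (Fin 3 → ℕ) → ℝ)
    (a : ℕ → ℤ → (Fin 3 → ℕ) → ℂ) (n : ℕ) (m : ℤ) (l : ℕ) (k : ℤ) : ℂ :=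
  ∑ α ∈ S n, ∑ β ∈ S l, conj (a l k β) * a n m α * (GPT α β : ℂ)

/-- The diagonal CGPT matrix `M_{nn}` with `(M_{nn})_{km} = M_{nmnk}`. -/
def cgptMat (S : ℕ → Finset (Fin 3 → ℕ)) (GPT : (Fin 3 → ℕ) → (Fin 3 → ℕ) → ℝ)
    (a : ℕ → ℤ → (Fin 3 → ℕ) → ℂ) (l n : ℕ) :
    Matrix (Fin (2 * l + 1)) (Fin (2 * n + 1)) ℂ :=
  Matrix.of fun k m => cgpt S GPT a n ((m : ℤ) - n) l ((k : ℤ) - l)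

theorem Matrix.isUnit_of_star_dotProduct_mulVec_ne_zero {m K : Type*} [Fintype m]
    [DecidableEq m] [Field K] [Star K] {A : Matrix m m K}
    (hA : ∀ v : m → K, v ≠ 0 → star v ⬝ᵥ A *ᵥ v ≠ 0) : IsUnit A := by
  refine mulVec_injective_iff_isUnit.mp fun x y hxy => ?_
  by_contra hne
  refine hA (x - y) (sub_ne_zero.mpr hne) ?_
  rw [mulVec_sub, hxy, sub_self, dotProduct_zero]

section QuadForm

variable {ι : Type*} (s : Finset ι) (G : ι → ι → ℝ)

def quadForm (γ : ι → ℝ) : ℝ := ∑ α ∈ s, ∑ β ∈ s, γ α * G α β * γ β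

theorem quadForm_neg (γ : ι → ℝ) : quadForm s (-G) γ = -quadForm s G γ := by
  simp only [quadForm, Pi.neg_apply, mul_neg, neg_mul, sum_neg_distrib]

theorem quadForm_eq_zero {γ : ι → ℝ} (hγ : ∀ α ∈ s, γ α = 0) : quadForm s G γ = 0 :=
  sum_eq_zero fun α hα => sum_eq_zero fun β _ => by rw [hγ α hα, zero_mul, zero_mul]

/-- `Re (conj w_β · w_α) = Re w_α Re w_β + Im w_α Im w_β`. -/
theorem re_sum_conj_mul_mul_ofReal (w : ι → ℂ) :
    (∑ α ∈ s, ∑ β ∈ s, conj (w β) * w α * (G α β : ℂ)).re =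
      quadForm s G (fun α => (w α).re) + quadForm s G (fun α => (w α).im) := by
  simp only [quadForm, Complex.re_sum, ← sum_add_distrib]
  refine sum_congr rfl fun α _ => sum_congr rfl fun β _ => ?_
  simp only [Complex.mul_re, Complex.mul_im, Complex.conj_re, Complex.conj_im,
    Complex.ofReal_re, Complex.ofReal_im]
  ring

theorem quadForm_re_add_im_pos {p : (ι → ℝ) → Prop}
    (hpos : ∀ γ, p γ → (∃ α ∈ s, γ α ≠ 0) → 0 < quadForm s G γ)
    {w : ι → ℂ} (hre : p fun α => (w α).re) (him : p fun α => (w α).im)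
    (hw : ∃ α ∈ s, w α ≠ 0) :
    0 < quadForm s G (fun α => (w α).re) + quadForm s G (fun α => (w α).im) := by
  have hnonneg : ∀ γ, p γ → 0 ≤ quadForm s G γ := fun γ hγ => by
    by_cases hz : ∃ α ∈ s, γ α ≠ 0
    · exact (hpos γ hγ hz).le
    · exact (quadForm_eq_zero s G fun α hα => not_not.mp fun h => hz ⟨α, hα, h⟩).ge
  obtain ⟨α, hα, hwα⟩ := hw
  have hreim : (w α).re ≠ 0 ∨ (w α).im ≠ 0 := by
    rw [← not_and_or]
    exact fun h => hwα (Complex.ext h.1 h.2)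
  rcases hreim with h | h
  · linarith [hpos _ hre ⟨α, hα, h⟩, hnonneg _ him]
  · linarith [hpos _ him ⟨α, hα, h⟩, hnonneg _ hre]

theorem quadForm_re_add_im_neg {p : (ι → ℝ) → Prop}
    (hneg : ∀ γ, p γ → (∃ α ∈ s, γ α ≠ 0) → quadForm s G γ < 0)
    {w : ι → ℂ} (hre : p fun α => (w α).re) (him : p fun α => (w α).im)
    (hw : ∃ α ∈ s, w α ≠ 0) :
    quadForm s G (fun α => (w α).re) + quadForm s G (fun α => (w α).im) < 0 := by
  have hpos := quadForm_re_add_im_pos s (-G)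
    (fun γ hγ hne => by rw [quadForm_neg]; exact neg_pos.mpr (hneg γ hγ hne)) hre him hw
  rw [quadForm_neg, quadForm_neg] at hpos
  linarith

end QuadForm

theorem star_dotProduct_cgptMat_mulVec (S : ℕ → Finset (Fin 3 → ℕ))
    (GPT : (Fin 3 → ℕ) → (Fin 3 → ℕ) → ℝ) (a : ℕ → ℤ → (Fin 3 → ℕ) → ℂ) (n : ℕ)
    (v : Fin (2 * n + 1) → ℂ) :
    star v ⬝ᵥ cgptMat S GPT a n n *ᵥ v =
      ∑ α ∈ S n, ∑ β ∈ S n, conj (∑ k : Fin (2 * n + 1), v k * a n ((k : ℤ) - n) β) *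
        (∑ m : Fin (2 * n + 1), v m * a n ((m : ℤ) - n) α) * (GPT α β : ℂ) := by
  simp only [cgptMat, cgpt, dotProduct, mulVec, of_apply, Pi.star_apply, RCLike.star_def,
    map_sum, map_mul, mul_sum, sum_mul]
  calc _ = ∑ k : Fin (2 * n + 1), ∑ α ∈ S n, ∑ β ∈ S n, ∑ m : Fin (2 * n + 1),
        conj (v k) * (conj (a n ((k : ℤ) - n) β) * a n ((m : ℤ) - n) α * (GPT α β : ℂ) * v m) :=
        sum_congr rfl fun k _ => by rw [sum_comm]; exact sum_congr rfl fun α _ => sum_comm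
    _ = _ := by
      rw [sum_comm]
      refine sum_congr rfl fun α _ => ?_
      rw [sum_comm]
      refine sum_congr rfl fun β _ => ?_
      rw [sum_comm]
      exact sum_congr rfl fun m _ => sum_congr rfl fun k _ => by ring

/-- `Harm γ`: `γ` is the coefficient vector of a harmonic polynomial; `hHarm`, `hinj`: the real
and imaginary parts of the coefficient vector of `Σ_m v_m r^n Y_n^m` are harmonic, and
`v ↦ Σ_m v_m r^n Y_n^m` is injective; `hpos`: the positivity property of GPTs. -/
theorem cgptMat_diag_invertible_general
    (n : ℕ) (lam : ℝ) (hlam : 1 / 2 < |lam|)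
    (S : ℕ → Finset (Fin 3 → ℕ))
    (GPT : (Fin 3 → ℕ) → (Fin 3 → ℕ) → ℝ)
    (a : ℕ → ℤ → (Fin 3 → ℕ) → ℂ)
    (Harm : ((Fin 3 → ℕ) → ℝ) → Prop)
    (hHarm : ∀ v : Fin (2 * n + 1) → ℂ,
      Harm (fun α => (∑ m : Fin (2 * n + 1), v m * a n ((m : ℤ) - n) α).re) ∧
      Harm (fun α => (∑ m : Fin (2 * n + 1), v m * a n ((m : ℤ) - n) α).im))
    (hinj : ∀ v : Fin (2 * n + 1) → ℂ,
      (∀ α ∈ S n, (∑ m : Fin (2 * n + 1), v m * a n ((m : ℤ) - n) α) = 0) → v = 0)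
    (hpos : ∀ γ : (Fin 3 → ℕ) → ℝ, Harm γ → (∃ α ∈ S n, γ α ≠ 0) →
      ((1 / 2 < lam → 0 < ∑ α ∈ S n, ∑ β ∈ S n, γ α * GPT α β * γ β) ∧
       (lam ≤ -(1 / 2) → (∑ α ∈ S n, ∑ β ∈ S n, γ α * GPT α β * γ β) < 0))) :
    IsUnit (cgptMat S GPT a n n) ∧
    ∀ v : Fin (2 * n + 1) → ℂ, v ≠ 0 →
      (star v ⬝ᵥ (cgptMat S GPT a n n).mulVec v) ≠ 0 ∧
      (1 / 2 < lam → 0 < (star v ⬝ᵥ (cgptMat S GPT a n n).mulVec v).re) ∧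
      (lam ≤ -(1 / 2) → (star v ⬝ᵥ (cgptMat S GPT a n n).mulVec v).re < 0) := by
  have hsign : ∀ v : Fin (2 * n + 1) → ℂ, v ≠ 0 →
      (1 / 2 < lam → 0 < (star v ⬝ᵥ cgptMat S GPT a n n *ᵥ v).re) ∧
      (lam ≤ -(1 / 2) → (star v ⬝ᵥ cgptMat S GPT a n n *ᵥ v).re < 0) := by
    intro v hv
    have hw : ∃ α ∈ S n, (∑ m : Fin (2 * n + 1), v m * a n ((m : ℤ) - n) α) ≠ 0 := by
      by_contra! h
      exact hv (hinj v h)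
    rw [star_dotProduct_cgptMat_mulVec, re_sum_conj_mul_mul_ofReal]
    exact ⟨fun hl => quadForm_re_add_im_pos _ _ (fun γ hγ hγ0 => (hpos γ hγ hγ0).1 hl)
        (hHarm v).1 (hHarm v).2 hw,
      fun hl => quadForm_re_add_im_neg _ _ (fun γ hγ hγ0 => (hpos γ hγ hγ0).2 hl)
        (hHarm v).1 (hHarm v).2 hw⟩
  have hne : ∀ v : Fin (2 * n + 1) → ℂ, v ≠ 0 → star v ⬝ᵥ cgptMat S GPT a n n *ᵥ v ≠ 0 := by
    intro v hv h0
    rcases lt_abs.mp hlam with hl | hl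
    · simpa [h0] using (hsign v hv).1 hl
    · simpa [h0] using (hsign v hv).2 (by linarith)
  exact ⟨isUnit_of_star_dotProduct_mulVec_ne_zero hne, fun v hv => ⟨hne v hv, hsign v hv⟩⟩

/-- The matrix `M_{nn}(D)` is invertible; more precisely, for
every nonzero `v ∈ ℂ^{2n+1}` the quadratic form `v* M_{nn} v` is nonzero
(strictly positive when `λ > 1/2`, strictly negative when `λ ≤ −1/2`).
Hypotheses: `S n` is the set of multi-indices of length `n`; `hsym` is the
symmetry of GPTs on harmonic combinations (making `v* M_{nn} v` real);
`Harm γ` expresses that `γ` is the coefficient vector of a harmonic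
polynomial, `hHarm` says that the real and imaginary parts of the coefficient
vector of `Σ_m v_m r^n Y_n^m` are such; `hinj` says that `v ↦ Σ_m v_m r^n Y_n^m`
is injective; `hpos` is the positivity property of GPTs. -/
theorem cgptMat_diag_invertible
    (n : ℕ) (hn : 1 ≤ n) (lam : ℝ) (hlam : 1 / 2 < |lam|)
    (S : ℕ → Finset (Fin 3 → ℕ))
    (hS : ∀ (ν : ℕ) (α : Fin 3 → ℕ), α ∈ S ν ↔ α 0 + α 1 + α 2 = ν)
    (GPT : (Fin 3 → ℕ) → (Fin 3 → ℕ) → ℝ)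
    (a : ℕ → ℤ → (Fin 3 → ℕ) → ℂ)
    (hsym : ∀ (m k : ℤ),
      (∑ α ∈ S n, ∑ β ∈ S n, conj (a n k β) * a n m α * (GPT α β : ℂ)) =
      ∑ α ∈ S n, ∑ β ∈ S n, conj (a n k β) * a n m α * (GPT β α : ℂ))
    (Harm : ((Fin 3 → ℕ) → ℝ) → Prop)
    (hHarm : ∀ v : Fin (2 * n + 1) → ℂ,
      Harm (fun α => (∑ m : Fin (2 * n + 1), v m * a n ((m : ℤ) - n) α).re) ∧
      Harm (fun α => (∑ m : Fin (2 * n + 1), v m * a n ((m : ℤ) - n) α).im))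
    (hinj : ∀ v : Fin (2 * n + 1) → ℂ,
      (∀ α ∈ S n, (∑ m : Fin (2 * n + 1), v m * a n ((m : ℤ) - n) α) = 0) → v = 0)
    (hpos : ∀ γ : (Fin 3 → ℕ) → ℝ, Harm γ → (∃ α ∈ S n, γ α ≠ 0) →
      ((1 / 2 < lam → 0 < ∑ α ∈ S n, ∑ β ∈ S n, γ α * GPT α β * γ β) ∧
       (lam ≤ -(1 / 2) → (∑ α ∈ S n, ∑ β ∈ S n, γ α * GPT α β * γ β) < 0))) :
    IsUnit (cgptMat S GPT a n n) ∧
    ∀ v : Fin (2 * n + 1) → ℂ, v ≠ 0 →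
      (star v ⬝ᵥ (cgptMat S GPT a n n).mulVec v) ≠ 0 ∧
      (1 / 2 < lam → 0 < (star v ⬝ᵥ (cgptMat S GPT a n n).mulVec v).re) ∧
      (lam ≤ -(1 / 2) → (star v ⬝ᵥ (cgptMat S GPT a n n).mulVec v).re < 0) :=
  cgptMat_diag_invertible_general n lam hlam S GPT a Harm hHarm hinj hpos
end
end

section
/- For the composed transformation D ↦ T_z T^s R(D) (rotate by R, scale by s, shift by z), the CGPT block matrix of order K satisfies M(T_z T^s R(D)) = s · conj(G(z)) conj(Q(s,R)) M(D) Q(s,R)^t G(z)^t, where G(z) is the lower block-triangular matrix of translation blocks G_{li}(z) and Q(s,R) is the block-diagonal matrix with blocks s^n Q_n(R). -/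
/-!
Write every matrix over `BIdx K` as a family of blocks indexed by degrees; block products are
then sums over the middle degree. Since `G(z)` is block lower triangular, multiplying by it
truncates these sums to `i ≤ l`, which is exactly the range in the shift rule; since `Q(s,R)` is
block diagonal, multiplying by it replaces the `l`-th block row by `sˡ conj(Q_l)` times it.
The shift rule then accounts for the outer factors `G(z)`, and the scaling and rotation rules
for the inner factors `s Q(s,R)`, because `s^(l+n+1) = s · sˡ · sⁿ`.
-/

open Matrix Finset
open scoped Pointwise

noncomputable section

/-- Block index set for the order-`K` CGPT block matrix: a pair of a degree
`l ∈ {1, …, K}` (encoded as `l : Fin K`, standing for the degree `l+1`) and an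
order index in `Fin (2(l+1)+1)`.  Its cardinality is `K² + 2K`. -/
def BIdx (K : ℕ) := Σ l : Fin K, Fin (2 * ((l : ℕ) + 1) + 1)

instance (K : ℕ) : Fintype (BIdx K) := by unfold BIdx; infer_instance

/-- The CGPT block matrix `M(D) = (M_{ln}(D))_{1 ≤ l,n ≤ K}`. -/
def blockM {K : ℕ}
    (M : Set (Fin 3 → ℝ) → (l n : ℕ) → Matrix (Fin (2 * l + 1)) (Fin (2 * n + 1)) ℂ)
    (D : Set (Fin 3 → ℝ)) : Matrix (BIdx K) (BIdx K) ℂ :=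
  fun p q => M D ((p.1 : ℕ) + 1) ((q.1 : ℕ) + 1) p.2 q.2

/-- The block lower-triangular matrix `G(z)` with `(l,i)`-block `G_{li}(z)`
for `i ≤ l` and `0` otherwise. -/
def blockG {K : ℕ}
    (G : (Fin 3 → ℝ) → (l i : ℕ) → Matrix (Fin (2 * l + 1)) (Fin (2 * i + 1)) ℂ)
    (z : Fin 3 → ℝ) : Matrix (BIdx K) (BIdx K) ℂ :=
  fun p q => if (q.1 : ℕ) ≤ (p.1 : ℕ) then G z ((p.1 : ℕ) + 1) ((q.1 : ℕ) + 1) p.2 q.2 else 0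

/-- The block diagonal matrix `Q(s,R)` with `n`-th diagonal block `sⁿ Q_n(R)`. -/
def blockQ {K : ℕ}
    (Q : (n : ℕ) → Matrix (Fin (2 * n + 1)) (Fin (2 * n + 1)) ℂ)
    (s : ℝ) : Matrix (BIdx K) (BIdx K) ℂ :=
  fun p q =>
    if h : (p.1 : ℕ) = (q.1 : ℕ) then
      (s : ℂ) ^ ((p.1 : ℕ) + 1) * Q ((p.1 : ℕ) + 1) p.2 (Fin.cast (by rw [h]) q.2)
    else 0

section BlockMatrix

variable {α : Type*} {K : ℕ}

def blockMatrix (K : ℕ) (B : (l n : ℕ) → Matrix (Fin (2 * l + 1)) (Fin (2 * n + 1)) α) :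
    Matrix (BIdx K) (BIdx K) α :=
  fun p q => B ((p.1 : ℕ) + 1) ((q.1 : ℕ) + 1) p.2 q.2

theorem blockMatrix_congr {A B : (l n : ℕ) → Matrix (Fin (2 * l + 1)) (Fin (2 * n + 1)) α}
    (h : ∀ l n, 1 ≤ l → l ≤ K → 1 ≤ n → n ≤ K → A l n = B l n) :
    blockMatrix K A = blockMatrix K B := by
  ext p q
  simp only [blockMatrix, h _ _ (Nat.le_add_left 1 _) p.1.isLt (Nat.le_add_left 1 _) q.1.isLt]

theorem sum_bidx [AddCommMonoid α] (f : BIdx K → α) :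
    ∑ p : BIdx K, f p = ∑ l : Fin K, ∑ j : Fin (2 * ((l : ℕ) + 1) + 1), f ⟨l, j⟩ :=
  Fintype.sum_sigma f

theorem sum_fin_succ_eq_sum_Icc [AddCommMonoid α] (f : ℕ → α) :
    ∑ i : Fin K, f ((i : ℕ) + 1) = ∑ i ∈ Icc 1 K, f i := by
  rw [Fin.sum_univ_eq_sum_range (fun i => f (i + 1)), range_eq_Ico, sum_Ico_add']
  rfl

theorem sum_Icc_ite_le [AddCommMonoid α] {l : ℕ} (hl : l ≤ K) (f : ℕ → α) :
    ∑ i ∈ Icc 1 K, (if i ≤ l then f i else 0) = ∑ i ∈ Icc 1 l, f i := by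
  rw [← sum_filter]
  congr 1
  ext i
  simp only [mem_filter, mem_Icc]
  omega

theorem blockMatrix_mul [NonUnitalNonAssocSemiring α]
    (A B : (l n : ℕ) → Matrix (Fin (2 * l + 1)) (Fin (2 * n + 1)) α) :
    blockMatrix K A * blockMatrix K B =
      blockMatrix K (fun l n => ∑ i ∈ Icc 1 K, A l i * B i n) := by
  ext p q
  simp only [mul_apply, blockMatrix, Matrix.sum_apply]
  rw [sum_bidx]
  exact sum_fin_succ_eq_sum_Icc (fun i => (A _ i * B i _) p.2 q.2)

theorem smul_blockMatrix {R : Type*} [SMul R α] (c : R)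
    (B : (l n : ℕ) → Matrix (Fin (2 * l + 1)) (Fin (2 * n + 1)) α) :
    c • blockMatrix K B = blockMatrix K (fun l n => c • B l n) := rfl

theorem blockMatrix_lowerTriangular_mul [NonUnitalNonAssocSemiring α]
    (A B : (l n : ℕ) → Matrix (Fin (2 * l + 1)) (Fin (2 * n + 1)) α) :
    blockMatrix K (fun l i => if i ≤ l then A l i else 0) * blockMatrix K B =
      blockMatrix K (fun l n => ∑ i ∈ Icc 1 l, A l i * B i n) := by
  rw [blockMatrix_mul]
  refine blockMatrix_congr fun l n _ hlK _ _ => ?_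
  rw [← sum_Icc_ite_le hlK]
  refine sum_congr rfl fun i _ => ?_
  split_ifs <;> simp

theorem blockMatrix_mul_upperTriangular [NonUnitalNonAssocSemiring α]
    (A B : (l n : ℕ) → Matrix (Fin (2 * l + 1)) (Fin (2 * n + 1)) α) :
    blockMatrix K A * blockMatrix K (fun i n => if i ≤ n then B i n else 0) =
      blockMatrix K (fun l n => ∑ i ∈ Icc 1 n, A l i * B i n) := by
  rw [blockMatrix_mul]
  refine blockMatrix_congr fun l n _ _ _ hnK => ?_
  rw [← sum_Icc_ite_le hnK]
  refine sum_congr rfl fun i _ => ?_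
  split_ifs <;> simp

end BlockMatrix

section CGPT

variable {K : ℕ}

theorem blockM_eq_blockMatrix
    (M : Set (Fin 3 → ℝ) → (l n : ℕ) → Matrix (Fin (2 * l + 1)) (Fin (2 * n + 1)) ℂ)
    (D : Set (Fin 3 → ℝ)) : blockM (K := K) M D = blockMatrix K (M D) := rfl

theorem conj_blockG (G : (Fin 3 → ℝ) → (l i : ℕ) → Matrix (Fin (2 * l + 1)) (Fin (2 * i + 1)) ℂ)
    (z : Fin 3 → ℝ) :
    (blockG (K := K) G z).map (starRingEnd ℂ) =
      blockMatrix K (fun l i => if i ≤ l then (G z l i).map (starRingEnd ℂ) else 0) := by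
  ext p q
  simp only [map_apply, blockG, blockMatrix, add_le_add_iff_right]
  split_ifs <;> simp

theorem blockG_transpose
    (G : (Fin 3 → ℝ) → (l i : ℕ) → Matrix (Fin (2 * l + 1)) (Fin (2 * i + 1)) ℂ)
    (z : Fin 3 → ℝ) :
    (blockG (K := K) G z)ᵀ = blockMatrix K (fun i l => if i ≤ l then (G z l i)ᵀ else 0) := by
  ext p q
  simp only [transpose_apply, blockG, blockMatrix, add_le_add_iff_right]
  split_ifs <;> rfl

theorem blockQ_apply_self (Q : (n : ℕ) → Matrix (Fin (2 * n + 1)) (Fin (2 * n + 1)) ℂ) (s : ℝ)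
    (l : Fin K) (i j : Fin (2 * ((l : ℕ) + 1) + 1)) :
    blockQ (K := K) Q s ⟨l, i⟩ ⟨l, j⟩ = (s : ℂ) ^ ((l : ℕ) + 1) * Q ((l : ℕ) + 1) i j := by
  simp [blockQ]

theorem blockQ_apply_of_ne (Q : (n : ℕ) → Matrix (Fin (2 * n + 1)) (Fin (2 * n + 1)) ℂ) (s : ℝ)
    {l n : Fin K} (i : Fin (2 * ((l : ℕ) + 1) + 1)) (j : Fin (2 * ((n : ℕ) + 1) + 1))
    (h : l ≠ n) : blockQ (K := K) Q s ⟨l, i⟩ ⟨n, j⟩ = 0 :=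
  dif_neg (Fin.val_ne_of_ne h)

theorem conj_blockQ_mul (Q : (n : ℕ) → Matrix (Fin (2 * n + 1)) (Fin (2 * n + 1)) ℂ) (s : ℝ)
    (A : (l n : ℕ) → Matrix (Fin (2 * l + 1)) (Fin (2 * n + 1)) ℂ) :
    (blockQ (K := K) Q s).map (starRingEnd ℂ) * blockMatrix K A =
      blockMatrix K (fun l n => (s : ℂ) ^ l • ((Q l).map (starRingEnd ℂ) * A l n)) := by
  ext p q
  simp only [mul_apply, map_apply]
  obtain ⟨l, i⟩ := p
  rw [sum_bidx, sum_eq_single l]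
  · simp [blockQ_apply_self, blockMatrix, mul_apply, mul_sum, mul_assoc]
  · intro m _ hm
    simp [blockQ_apply_of_ne Q s _ _ (Ne.symm hm)]
  · simp

theorem mul_blockQ_transpose (Q : (n : ℕ) → Matrix (Fin (2 * n + 1)) (Fin (2 * n + 1)) ℂ)
    (s : ℝ) (A : (l n : ℕ) → Matrix (Fin (2 * l + 1)) (Fin (2 * n + 1)) ℂ) :
    blockMatrix K A * (blockQ (K := K) Q s)ᵀ =
      blockMatrix K (fun l n => (s : ℂ) ^ n • (A l n * (Q n)ᵀ)) := by
  ext p q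
  simp only [mul_apply, transpose_apply]
  obtain ⟨n, j⟩ := q
  rw [sum_bidx, sum_eq_single n]
  · simp [blockQ_apply_self, blockMatrix, mul_apply, mul_sum, mul_left_comm]
  · intro m _ hm
    simp [blockQ_apply_of_ne Q s _ _ (Ne.symm hm)]
  · simp

theorem blockM_shift
    (M : Set (Fin 3 → ℝ) → (l n : ℕ) → Matrix (Fin (2 * l + 1)) (Fin (2 * n + 1)) ℂ)
    (G : (Fin 3 → ℝ) → (l i : ℕ) → Matrix (Fin (2 * l + 1)) (Fin (2 * i + 1)) ℂ)
    (z : Fin 3 → ℝ)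
    (hshift : ∀ (D : Set (Fin 3 → ℝ)) (l n : ℕ), 1 ≤ l → 1 ≤ n →
      M ((fun x => z + x) '' D) l n =
        ∑ i ∈ Icc 1 l, ∑ ν ∈ Icc 1 n, (G z l i).map (starRingEnd ℂ) * M D i ν * (G z n ν)ᵀ)
    (D : Set (Fin 3 → ℝ)) :
    blockM (K := K) M ((fun x => z + x) '' D) =
      (blockG (K := K) G z).map (starRingEnd ℂ) * blockM (K := K) M D * (blockG (K := K) G z)ᵀ := by
  rw [blockM_eq_blockMatrix, blockM_eq_blockMatrix, conj_blockG, blockG_transpose,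
    blockMatrix_lowerTriangular_mul, blockMatrix_mul_upperTriangular]
  refine blockMatrix_congr fun l n hl _ hn _ => ?_
  simp only [hshift D l n hl hn, Matrix.sum_mul]
  exact sum_comm

theorem blockM_smul_rotate
    (M : Set (Fin 3 → ℝ) → (l n : ℕ) → Matrix (Fin (2 * l + 1)) (Fin (2 * n + 1)) ℂ)
    (R : Matrix (Fin 3) (Fin 3) ℝ) (Q : (n : ℕ) → Matrix (Fin (2 * n + 1)) (Fin (2 * n + 1)) ℂ)
    (s : ℝ)
    (hscale : ∀ (D : Set (Fin 3 → ℝ)) (l n : ℕ), 1 ≤ l → 1 ≤ n →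
      M (s • D) l n = (s : ℂ) ^ (l + n + 1) • M D l n)
    (hrot : ∀ (D : Set (Fin 3 → ℝ)) (l n : ℕ), 1 ≤ l → 1 ≤ n →
      M (R.mulVec '' D) l n = (Q l).map (starRingEnd ℂ) * M D l n * (Q n)ᵀ)
    (D : Set (Fin 3 → ℝ)) :
    blockM (K := K) M (s • (R.mulVec '' D)) =
      (s : ℂ) • ((blockQ (K := K) Q s).map (starRingEnd ℂ) * blockM (K := K) M D *
        (blockQ (K := K) Q s)ᵀ) := by
  rw [blockM_eq_blockMatrix, blockM_eq_blockMatrix, conj_blockQ_mul, mul_blockQ_transpose,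
    smul_blockMatrix]
  refine blockMatrix_congr fun l n hl _ hn _ => ?_
  rw [hscale _ l n hl hn, hrot D l n hl hn, Matrix.smul_mul, smul_smul, smul_smul]
  congr 1
  ring

end CGPT

theorem blockM_transform_general {K : ℕ}
    (M : Set (Fin 3 → ℝ) → (l n : ℕ) → Matrix (Fin (2 * l + 1)) (Fin (2 * n + 1)) ℂ)
    (G : (Fin 3 → ℝ) → (l i : ℕ) → Matrix (Fin (2 * l + 1)) (Fin (2 * i + 1)) ℂ)
    (R : Matrix (Fin 3) (Fin 3) ℝ)
    (Q : (n : ℕ) → Matrix (Fin (2 * n + 1)) (Fin (2 * n + 1)) ℂ)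
    (s : ℝ) (z : Fin 3 → ℝ)
    (hscale : ∀ (D : Set (Fin 3 → ℝ)) (l n : ℕ), 1 ≤ l → 1 ≤ n →
      M (s • D) l n = (s : ℂ) ^ (l + n + 1) • M D l n)
    (hshift : ∀ (D : Set (Fin 3 → ℝ)) (l n : ℕ), 1 ≤ l → 1 ≤ n →
      M ((fun x => z + x) '' D) l n =
        ∑ i ∈ Finset.Icc 1 l, ∑ ν ∈ Finset.Icc 1 n,
          (G z l i).map (starRingEnd ℂ) * M D i ν * (G z n ν)ᵀ)
    (hrot : ∀ (D : Set (Fin 3 → ℝ)) (l n : ℕ), 1 ≤ l → 1 ≤ n →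
      M (R.mulVec '' D) l n = (Q l).map (starRingEnd ℂ) * M D l n * (Q n)ᵀ)
    (D : Set (Fin 3 → ℝ)) :
    blockM (K := K) M ((fun x => z + x) '' (s • (R.mulVec '' D))) =
      (s : ℂ) • ((blockG (K := K) G z).map (starRingEnd ℂ) *
        (blockQ (K := K) Q s).map (starRingEnd ℂ) * blockM (K := K) M D *
        (blockQ (K := K) Q s)ᵀ * (blockG (K := K) G z)ᵀ) := by
  rw [blockM_shift M G z hshift, blockM_smul_rotate M R Q s hscale hrot]
  simp only [Matrix.mul_smul, Matrix.smul_mul, Matrix.mul_assoc]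

/-- For `D ↦ T_z T^s R(D)` (rotate by `R ∈ SO(3)`, scale by
`s > 0`, shift by `z`), the order-`K` CGPT block matrix satisfies
`M(T_z T^s R(D)) = s · conj(G(z)) conj(Q(s,R)) M(D) Q(s,R)ᵗ G(z)ᵗ`.
The hypotheses are the scaling, shift and rotation transformation rules for
the individual CGPT matrices `M_{ln}`, with `Q n = Q_n(R)` the Wigner matrices
of the rotation `R`. -/
theorem blockM_transform {K : ℕ}
    (M : Set (Fin 3 → ℝ) → (l n : ℕ) → Matrix (Fin (2 * l + 1)) (Fin (2 * n + 1)) ℂ)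
    (G : (Fin 3 → ℝ) → (l i : ℕ) → Matrix (Fin (2 * l + 1)) (Fin (2 * i + 1)) ℂ)
    (R : Matrix (Fin 3) (Fin 3) ℝ) (hR : R * Rᵀ = 1) (hdet : R.det = 1)
    (Q : (n : ℕ) → Matrix (Fin (2 * n + 1)) (Fin (2 * n + 1)) ℂ)
    (s : ℝ) (hs : 0 < s) (z : Fin 3 → ℝ)
    (hscale : ∀ (D : Set (Fin 3 → ℝ)) (l n : ℕ), 1 ≤ l → 1 ≤ n →
      M (s • D) l n = (s : ℂ) ^ (l + n + 1) • M D l n)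
    (hshift : ∀ (D : Set (Fin 3 → ℝ)) (l n : ℕ), 1 ≤ l → 1 ≤ n →
      M ((fun x => z + x) '' D) l n =
        ∑ i ∈ Finset.Icc 1 l, ∑ ν ∈ Finset.Icc 1 n,
          (G z l i).map (starRingEnd ℂ) * M D i ν * (G z n ν)ᵀ)
    (hrot : ∀ (D : Set (Fin 3 → ℝ)) (l n : ℕ), 1 ≤ l → 1 ≤ n →
      M (R.mulVec '' D) l n = (Q l).map (starRingEnd ℂ) * M D l n * (Q n)ᵀ)
    (D : Set (Fin 3 → ℝ)) :
    blockM (K := K) M ((fun x => z + x) '' (s • (R.mulVec '' D))) =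
      (s : ℂ) • ((blockG (K := K) G z).map (starRingEnd ℂ) *
        (blockQ (K := K) Q s).map (starRingEnd ℂ) * blockM (K := K) M D *
        (blockQ (K := K) Q s)ᵀ * (blockG (K := K) G z)ᵀ) :=
  blockM_transform_general M G R Q s z hscale hshift hrot D
end
end
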